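/- Let m ≥ 2 be an integer and ε = 1/(2m). Let q ∈ ℝ^m be given by q_i = −1 for i ∈ {1,…,m−1} and q_m = 1 (so ‖q‖_∞ = 1). Then: (a) for every probability vector u ∈ ℝ^m, sup_{v∈[0,1]} [ u_m (M_m − v) − ∑_{i=1}^{m−1} u_i (M_i − v) ] ≥ ε; and (b) for the probability vector u* with u*_{m−1} = u*_m = 1/2 and u*_i = 0 otherwise, the expression u*_m(M_m − v) − ∑_{i=1}^{m−1} u*_i (M_i − v) equals ε for every v ∈ [0,1]. Hence min_u sup_{v∈[0,1]} [∑_i u_i q_i (M_i − v)] = ε = ε‖q‖_∞, i.e., the mixed game value Val(q) = 0. -/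

import Mathlib

/-- Gridpoint M_i = (2i-1)/(2m). -/
noncomputable def Mg (m i : ℕ) : ℝ := (2 * (i : ℝ) - 1) / (2 * m)

/-- For q with q_i = -1 (i < m) and q_m = 1, the payoff
∑_i u_i q_i (M_i − v) = u_m (M_m − v) − ∑_{i=1}^{m-1} u_i (M_i − v). -/
noncomputable def payoff (m : ℕ) (u : ℕ → ℝ) (v : ℝ) : ℝ :=
  u m * (Mg m m - v) - ∑ i ∈ Finset.Icc 1 (m - 1), u i * (Mg m i - v)

/-! For every `v`, the payoff of `u` is at least that of the strategy that keeps `u_m` and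
moves the remaining mass `1 - u_m` to the largest gridpoint `M_{m-1}` with `q_i = -1`. That
two-point payoff is `(2u_m - 1)(1 - v) + ε(3 - 4u_m)`: at `v = 1` it is at least `ε` when
`u_m ≤ 1/2`, at `v = 0` when `u_m ≥ 1/2`, and for `u_m = 1/2` it is identically `ε`. -/

theorem Mg_monotone (m : ℕ) : Monotone (Mg m) := fun i j hij => by
  unfold Mg
  gcongr

theorem Mg_self {m : ℕ} (hm : m ≠ 0) : Mg m m = 1 - 1 / (2 * m) := by
  unfold Mg
  field_simp

theorem Mg_pred {m : ℕ} (hm : 1 ≤ m) : Mg m (m - 1) = 1 - 3 / (2 * m) := by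
  have hm0 : (m : ℝ) ≠ 0 := by positivity
  unfold Mg
  rw [Nat.cast_sub hm]
  field_simp
  ring

theorem sum_Icc_pred_eq_one_sub {m : ℕ} (hm : 1 ≤ m) {u : ℕ → ℝ}
    (hsum : ∑ i ∈ Finset.Icc 1 m, u i = 1) :
    ∑ i ∈ Finset.Icc 1 (m - 1), u i = 1 - u m := by
  have hsplit := Finset.sum_Icc_succ_top (by omega : 1 ≤ m - 1 + 1) u
  rw [Nat.sub_add_cancel hm] at hsplit
  linarith

theorem payoff_ge_two_point {m : ℕ} (hm : 1 ≤ m) {u : ℕ → ℝ}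
    (hu : ∀ i, 1 ≤ i → i ≤ m → 0 ≤ u i) (hsum : ∑ i ∈ Finset.Icc 1 m, u i = 1) (v : ℝ) :
    u m * (Mg m m - v) - (1 - u m) * (Mg m (m - 1) - v) ≤ payoff m u v := by
  have hlow : ∑ i ∈ Finset.Icc 1 (m - 1), u i * (Mg m i - v)
      ≤ ∑ i ∈ Finset.Icc 1 (m - 1), u i * (Mg m (m - 1) - v) := by
    refine Finset.sum_le_sum fun i hi => ?_
    obtain ⟨hi1, him⟩ := Finset.mem_Icc.mp hi
    have hMg : Mg m i ≤ Mg m (m - 1) := Mg_monotone m him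
    exact mul_le_mul_of_nonneg_left (by linarith) (hu i hi1 (by omega))
  rw [← Finset.sum_mul, sum_Icc_pred_eq_one_sub hm hsum] at hlow
  unfold payoff
  linarith

theorem continuous_payoff (m : ℕ) (u : ℕ → ℝ) : Continuous (payoff m u) := by
  unfold payoff
  fun_prop

theorem payoff_le_sSup_image {m : ℕ} {u : ℕ → ℝ} {v : ℝ} (hv : v ∈ Set.Icc (0 : ℝ) 1) :
    payoff m u v ≤ sSup (payoff m u '' Set.Icc 0 1) :=
  le_csSup ((isCompact_Icc.image (continuous_payoff m u)).bddAbove) ⟨v, hv, rfl⟩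

theorem le_sSup_payoff_image {m : ℕ} (hm : 1 ≤ m) {u : ℕ → ℝ}
    (hu : ∀ i, 1 ≤ i → i ≤ m → 0 ≤ u i) (hsum : ∑ i ∈ Finset.Icc 1 m, u i = 1) :
    1 / (2 * m) ≤ sSup (payoff m u '' Set.Icc 0 1) := by
  have hm' : (1 : ℝ) ≤ m := by exact_mod_cast hm
  have hε0 : 0 ≤ 1 / (2 * (m : ℝ)) := by positivity
  have hε : 1 / (2 * (m : ℝ)) ≤ 1 / 2 := by gcongr; linarith
  have hpayoff := payoff_ge_two_point hm hu hsum
  rw [Mg_self (by omega), Mg_pred hm, show 3 / (2 * (m : ℝ)) = 3 * (1 / (2 * m)) by ring]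
    at hpayoff
  generalize 1 / (2 * (m : ℝ)) = ε at hε0 hε hpayoff ⊢
  rcases le_total (u m) (1 / 2) with hum | hum
  · refine le_trans ?_ (payoff_le_sSup_image (v := 1) ⟨zero_le_one, le_rfl⟩)
    linarith [hpayoff 1, mul_nonneg hε0 (sub_nonneg.mpr hum)]
  · refine le_trans ?_ (payoff_le_sSup_image (v := 0) ⟨le_rfl, zero_le_one⟩)
    linarith [hpayoff 0, mul_nonneg (sub_nonneg.mpr hum) (sub_nonneg.mpr hε)]

theorem payoff_half_half {m : ℕ} (hm : 2 ≤ m) (v : ℝ) :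
    payoff m (fun i => if i = m ∨ i = m - 1 then (1 : ℝ) / 2 else 0) v = 1 / (2 * m) := by
  have hsum : ∑ i ∈ Finset.Icc 1 (m - 1),
      (if i = m ∨ i = m - 1 then (1 : ℝ) / 2 else 0) * (Mg m i - v)
      = 1 / 2 * (Mg m (m - 1) - v) := by
    rw [Finset.sum_eq_single_of_mem (m - 1) (Finset.mem_Icc.mpr ⟨by omega, le_rfl⟩)]
    · simp
    · intro i hi hne
      have him := (Finset.mem_Icc.mp hi).2
      rw [if_neg (by omega), zero_mul]
  rw [payoff, hsum, if_pos (Or.inl rfl), Mg_self (by omega), Mg_pred (by omega)]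
  ring

/-- from the proof of Lemma 4.9: for q = (−1,…,−1,1) with
‖q‖_∞ = 1 and ε = 1/(2m):
(a) every probability vector u has sup_{v∈[0,1]} ∑_i u_i q_i (M_i − v) ≥ ε, and
(b) the probability vector u* with u*_{m-1} = u*_m = 1/2 achieves payoff exactly
ε for every v ∈ [0,1].  Hence min_u sup_v ∑_i u_i q_i (M_i − v) = ε = ε‖q‖_∞,
i.e. the mixed game value Val(q) = 0. -/
theorem mixed_game_value_zero (m : ℕ) (hm : 2 ≤ m) :
    (∀ u : ℕ → ℝ, (∀ i, 1 ≤ i → i ≤ m → 0 ≤ u i) →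
      (∑ i ∈ Finset.Icc 1 m, u i) = 1 →
      1 / (2 * m) ≤ sSup ((fun v => payoff m u v) '' Set.Icc (0 : ℝ) 1)) ∧
    (∀ v ∈ Set.Icc (0 : ℝ) 1,
      payoff m (fun i => if i = m ∨ i = m - 1 then (1 : ℝ) / 2 else 0) v
        = 1 / (2 * m)) :=
  ⟨fun _ hu hsum => le_sSup_payoff_image (by omega) hu hsum,
    fun v _ => payoff_half_half hm v⟩
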